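/- Let d≥2, n≥0, k with 0≤k≤n−2, and h=(h_1,...,h_d) with h_1≥k and Σh_i = n+k. With C(d,h,ℓ) = {b∈ℕ^d : Σb_i=ℓ, b_i≤h_i} and δ_{k−ℓ} = |{b∈C(d,h,k) : b_1=ℓ}| for 0≤ℓ≤k, the following identity of positive rationals holds: (Π_{b'∈C(d,h,k)} b'_1!···b'_d! / Π_{b∈C(d,h,n)} b_1!···b_d!) · Π_{ℓ=0}^{k} ((ℓ+1)(ℓ+2)···(ℓ+n−k))^{δ_{k−ℓ}} = Π_{b∈C(d,h,n)} multinomial(n; b_1,...,b_d) / Π_{b'∈C(d,h,k)} multinomial(n; b'_1+n−k, b'_2,...,b'_d). -/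
import Mathlib


/-- `C(d,h,ℓ)`: tuples in `ℕ^d` summing to `ℓ` with `b i ≤ h i`. -/
def Ctup (d : ℕ) (h : Fin d → ℕ) (ℓ : ℕ) : Finset (Fin d → ℕ) :=
  (Finset.Nat.antidiagonalTuple d ℓ).filter (fun b => ∀ i, b i ≤ h i)

/-- The multinomial `N!/(c_1!⋯c_d!)` as a rational number. -/
def multQ (d N : ℕ) (c : Fin d → ℕ) : ℚ :=
  (N.factorial : ℚ) / ∏ i, ((c i).factorial : ℚ)

lemma mem_Ctup {d : ℕ} {h : Fin d → ℕ} {ℓ : ℕ} {b : Fin d → ℕ} :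
    b ∈ Ctup d h ℓ ↔ (∑ i, b i = ℓ ∧ ∀ i, b i ≤ h i) := by
  simp [Ctup, Finset.Nat.mem_antidiagonalTuple]

lemma factQ_add (a m : ℕ) :
    (((a + m).factorial : ℚ)) = a.factorial * ∏ j ∈ Finset.Icc 1 m, ((a : ℚ) + j) := by
  induction m with
  | zero => simp
  | succ m ih =>
    rw [Finset.prod_Icc_succ_top (by omega : 1 ≤ m + 1), show a + (m+1) = (a+m)+1 from rfl,
      Nat.factorial_succ]
    push_cast
    rw [ih]; ring

lemma ctup_card (d n k : ℕ) (h : Fin d → ℕ) (hsum : ∑ i, h i = n + k) :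
    (Ctup d h k).card = (Ctup d h n).card := by
  apply Finset.card_bij (fun b _ => fun i => h i - b i)
  · intro b hb
    obtain ⟨hbs, hble⟩ := mem_Ctup.1 hb
    refine mem_Ctup.2 ⟨?_, fun i => Nat.sub_le _ _⟩
    have : ∑ i, (h i - b i) + ∑ i, b i = ∑ i, h i := by
      rw [← Finset.sum_add_distrib]
      exact Finset.sum_congr rfl fun i _ => Nat.sub_add_cancel (hble i)
    omega
  · intro b hb b' hb' heq
    obtain ⟨_, hble⟩ := mem_Ctup.1 hb
    obtain ⟨_, hble'⟩ := mem_Ctup.1 hb'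
    funext i
    have h1 := congrFun heq i
    have h2 := hble i; have h3 := hble' i
    omega
  · intro c hc
    obtain ⟨hcs, hcle⟩ := mem_Ctup.1 hc
    refine ⟨fun i => h i - c i, mem_Ctup.2 ⟨?_, fun i => Nat.sub_le _ _⟩, ?_⟩
    · have : ∑ i, (h i - c i) + ∑ i, c i = ∑ i, h i := by
        rw [← Finset.sum_add_distrib]
        exact Finset.sum_congr rfl fun i _ => Nat.sub_add_cancel (hcle i)
      omega
    · funext i
      have := hcle i
      simp; omega

/-- with `δ_{k-ℓ} = |{b ∈ C(d,h,k) : b_1 = ℓ}|` (valid under `h_1 ≥ k`),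
`(Π_{b'∈C(d,h,k)} b'! / Π_{b∈C(d,h,n)} b!) · Π_{ℓ=0}^k ((ℓ+1)⋯(ℓ+n-k))^{δ_{k-ℓ}}
 = Π_{b∈C(d,h,n)} binom(n;b) / Π_{b'∈C(d,h,k)} binom(n; b'_1+n-k, b'_2,...,b'_d)`. -/
theorem stmt16 (d n k : ℕ) (hd : 2 ≤ d) (hk : k + 2 ≤ n) (h : Fin d → ℕ)
    (hh1 : k ≤ h ⟨0, by omega⟩) (hsum : ∑ i, h i = n + k) :
    ((∏ b' ∈ Ctup d h k, ∏ i, ((b' i).factorial : ℚ)) /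
        (∏ b ∈ Ctup d h n, ∏ i, ((b i).factorial : ℚ))) *
      ∏ ℓ ∈ Finset.range (k + 1),
        (∏ j ∈ Finset.Icc 1 (n - k), ((ℓ : ℚ) + j)) ^
          (((Ctup d h k).filter (fun b => b ⟨0, by omega⟩ = ℓ)).card) =
    (∏ b ∈ Ctup d h n, multQ d n b) /
      (∏ b' ∈ Ctup d h k, multQ d n (Function.update b' ⟨0, by omega⟩
        (b' ⟨0, by omega⟩ + (n - k)))) := by
  set e0 : Fin d := ⟨0, by omega⟩ with he0
  set A := Ctup d h k with hA
  set B := Ctup d h n with hB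
  set F : ℕ → ℚ := fun ℓ => ∏ j ∈ Finset.Icc 1 (n - k), ((ℓ : ℚ) + j) with hF
  -- grouping
  have hgroup : (∏ ℓ ∈ Finset.range (k + 1),
      F ℓ ^ ((A.filter (fun b => b e0 = ℓ)).card)) = ∏ b' ∈ A, F (b' e0) := by
    have hmaps : ∀ b ∈ A, b e0 ∈ Finset.range (k + 1) := by
      intro b hb
      obtain ⟨hbs, _⟩ := mem_Ctup.1 hb
      have : b e0 ≤ ∑ i, b i := Finset.single_le_sum (fun i _ => Nat.zero_le _) (Finset.mem_univ e0)
      exact Finset.mem_range.2 (by omega)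
    rw [← Finset.prod_fiberwise_of_maps_to hmaps (fun b' => F (b' e0))]
    refine Finset.prod_congr rfl fun ℓ _ => ?_
    rw [Finset.prod_congr rfl (fun x hx => by
      rw [(Finset.mem_filter.1 hx).2]), Finset.prod_const]
  -- per-element
  have hper : ∀ b' ∈ A,
      (∏ i, ((Function.update b' e0 (b' e0 + (n - k)) i).factorial : ℚ)) =
        F (b' e0) * ∏ i, ((b' i).factorial : ℚ) := by
    intro b' _
    have : (fun i => ((Function.update b' e0 (b' e0 + (n - k)) i).factorial : ℚ)) =
        Function.update (fun i => ((b' i).factorial : ℚ)) e0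
          (((b' e0 + (n - k)).factorial : ℚ)) := by
      funext j
      by_cases hj : j = e0
      · subst hj; simp
      · simp [Function.update_of_ne hj]
    rw [this, Finset.prod_update_of_mem (Finset.mem_univ e0), factQ_add,
      Finset.sdiff_singleton_eq_erase,
      ← Finset.mul_prod_erase Finset.univ _ (Finset.mem_univ e0)]
    ring
  have hDB : (∏ b ∈ B, ∏ i, ((b i).factorial : ℚ)) ≠ 0 :=
    Finset.prod_ne_zero_iff.2 fun b _ => Finset.prod_ne_zero_iff.2 fun i _ =>
      Nat.cast_ne_zero.2 (Nat.factorial_ne_zero _)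
  have hUA : (∏ b' ∈ A, ∏ i, ((Function.update b' e0 (b' e0 + (n - k)) i).factorial : ℚ)) ≠ 0 :=
    Finset.prod_ne_zero_iff.2 fun b _ => Finset.prod_ne_zero_iff.2 fun i _ =>
      Nat.cast_ne_zero.2 (Nat.factorial_ne_zero _)
  have hn : ((n.factorial : ℚ)) ≠ 0 := Nat.cast_ne_zero.2 (Nat.factorial_ne_zero _)
  have hcard : A.card = B.card := ctup_card d n k h hsum
  calc ((∏ b' ∈ A, ∏ i, ((b' i).factorial : ℚ)) /
        (∏ b ∈ B, ∏ i, ((b i).factorial : ℚ))) *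
      ∏ ℓ ∈ Finset.range (k + 1), F ℓ ^ ((A.filter (fun b => b e0 = ℓ)).card)
      = (∏ b' ∈ A, ∏ i, ((Function.update b' e0 (b' e0 + (n - k)) i).factorial : ℚ)) /
        (∏ b ∈ B, ∏ i, ((b i).factorial : ℚ)) := by
        rw [hgroup, div_mul_eq_mul_div, ← Finset.prod_mul_distrib,
          Finset.prod_congr rfl hper]
        congr 1
        exact Finset.prod_congr rfl fun b' _ => mul_comm _ _
    _ = (∏ b ∈ B, multQ d n b) /
      (∏ b' ∈ A, multQ d n (Function.update b' e0 (b' e0 + (n - k)))) := by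
        simp only [multQ, Finset.prod_div_distrib, Finset.prod_const, hcard]
        rw [div_div_div_comm, div_self (pow_ne_zero _ hn), one_div_div]
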